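/- arXiv:1708.02263 — 3 statements merged into one kernel-verified Lean document; each statement's English description precedes it below -/
import Mathlib

section
/- Let (X, ‖·‖) be a reflexive Banach space with functionals ψ₁,…,ψₙ, Φ satisfying (X₁)–(X₈) and (F₁)–(F₆), and suppose inf_{𝒫} I = inf_{𝒫⁺} I where I = Σψᵢ − Φ. Then the infimum of I over the Pohozaev set 𝒫 is attained: there exists u ∈ 𝒫 with I(u) = inf_{w∈𝒫} I(w), and this infimum is strictly positive. -/
open Filter

/-- Weak convergence of a sequence in a normed space. -/
def WeakConv {X : Type*} [NormedAddCommGroup X] [NormedSpace ℝ X]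
    (u : ℕ → X) (v : X) : Prop :=
  ∀ f : X →L[ℝ] ℝ, Tendsto (fun k => f (u k)) atTop (nhds (f v))

/-!
Write `I = Σ ψᵢ - Φ` and `G = Σ λᵢ ψᵢ - λ_Φ Φ`, so that `𝒫 = {u ≠ 0 | G u = 0}`. On `𝒫` the
energy is `Σ (1 - λᵢ/λ_Φ) ψᵢ`, a positive combination of the `ψᵢ`; this makes it coercive and,
together with (F₃) and (F₄), bounded below by a positive constant. Since `G > 0` near `0`, every
`v ≠ 0` with `G v ≤ 0` has a dilate `t ∗ v ∈ 𝒫` with `t ∈ (0, 1]`, and dilating with `t ≤ 1`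
decreases every `ψᵢ`. Hence a minimizing sequence in `𝒫⁺` can be replaced, through `Q` and a
dilation, by one in `𝒫 ∩ Xʳ`. It is bounded, so a subsequence converges weakly to some `v` with
all `ψᵢ` converging; by (F₅) and (F₆) the limit satisfies `G v ≤ 0` and has reduced energy at
most the infimum, and a final dilation of `v` lands in `𝒫` at the infimum.
-/

open Topology

theorem WeakConv.comp_strictMono {X : Type*} [NormedAddCommGroup X] [NormedSpace ℝ X]
    {u : ℕ → X} {v : X} (h : WeakConv u v) {φ : ℕ → ℕ} (hφ : StrictMono φ) :
    WeakConv (u ∘ φ) v :=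
  fun f => (h f).comp hφ.tendsto_atTop

theorem exists_weakConv_subseq_tendsto {ι X : Type*} [Fintype ι] [NormedAddCommGroup X]
    [NormedSpace ℝ X]
    (hrefl : ∀ u : ℕ → X, (∃ M, ∀ k, ‖u k‖ ≤ M) →
      ∃ (φ : ℕ → ℕ) (v : X), StrictMono φ ∧ WeakConv (u ∘ φ) v)
    {f : ι → X → ℝ} {w : ℕ → X} (hw : ∃ M, ∀ k, ‖w k‖ ≤ M) {a b : ℝ}
    (hf : ∀ k i, f i (w k) ∈ Set.Icc a b) :
    ∃ (σ : ℕ → ℕ) (v : X) (L : ι → ℝ), StrictMono σ ∧ WeakConv (w ∘ σ) v ∧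
      ∀ i, Tendsto (fun k => f i (w (σ k))) atTop (𝓝 (L i)) := by
  obtain ⟨φ, v, hφ, hv⟩ := hrefl w hw
  obtain ⟨L, -, φ₂, hφ₂, hL⟩ :=
    (isCompact_Icc (a := fun _ : ι => a) (b := fun _ => b)).tendsto_subseq
      (x := fun k i => f i (w (φ k))) fun k => ⟨fun i => (hf _ i).1, fun i => (hf _ i).2⟩
  exact ⟨φ ∘ φ₂, v, L, hφ.comp hφ₂, hv.comp_strictMono hφ₂, fun i => tendsto_pi_nhds.1 hL i⟩

theorem exists_seq_mem_tendsto_sInf_image {α : Type*} {S : Set α} {f : α → ℝ}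
    (hS : S.Nonempty) (hf : BddBelow (f '' S)) :
    ∃ u : ℕ → α, (∀ k, u k ∈ S) ∧ Tendsto (fun k => f (u k)) atTop (𝓝 (sInf (f '' S))) := by
  obtain ⟨y, -, hy, hyS⟩ := exists_seq_tendsto_sInf (hS.image f) hf
  choose u huS hu using hyS
  exact ⟨u, huS, by simpa only [hu] using hy⟩

theorem eventually_sum_mul_rpow_lt_mul_rpow {ι : Type*} [Fintype ι] (a e : ι → ℝ) {E b : ℝ}
    (he : ∀ i, e i < E) (hb : 0 < b) :
    ∀ᶠ T in atTop, ∑ i, a i * T ^ e i < b * T ^ E := by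
  have hlim : Tendsto (fun T : ℝ => ∑ i, a i * T ^ (e i - E)) atTop (𝓝 0) := by
    have h := tendsto_finsetSum Finset.univ fun i _ =>
      (tendsto_rpow_neg_atTop (sub_pos.2 (he i))).const_mul (a i)
    simpa only [neg_sub, mul_zero, Finset.sum_const_zero] using h
  filter_upwards [hlim.eventually (gt_mem_nhds hb), eventually_gt_atTop 0] with T hT hT0
  have hsplit : ∑ i, a i * T ^ e i = (∑ i, a i * T ^ (e i - E)) * T ^ E := by
    rw [Finset.sum_mul]
    refine Finset.sum_congr rfl fun i _ => ?_
    rw [mul_assoc, ← Real.rpow_add hT0, sub_add_cancel]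
  rw [hsplit]
  exact mul_lt_mul_of_pos_right hT (Real.rpow_pos_of_pos hT0 E)

theorem exists_mem_Ioc_eq_zero_of_eventually_pos {X : Type*} [TopologicalSpace X] [Zero X]
    {G : X → ℝ} {γ : ℝ → X} {T : ℝ} (hG : Continuous G) (hG0 : ∀ᶠ u in 𝓝[≠] 0, 0 < G u)
    (hγ : ContinuousOn γ (Set.Ici 0)) (hγ0 : γ 0 = 0) (hγne : ∀ t, 0 < t → γ t ≠ 0)
    (hT : 0 < T) (hGT : G (γ T) ≤ 0) : ∃ t ∈ Set.Ioc 0 T, G (γ t) = 0 := by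
  have hγlim : Tendsto γ (𝓝[>] 0) (𝓝[≠] 0) := by
    refine tendsto_nhdsWithin_of_tendsto_nhds_of_eventually_within _ ?_
      (eventually_nhdsWithin_of_forall hγne)
    have h := (hγ 0 Set.self_mem_Ici).tendsto
    rw [hγ0] at h
    exact h.mono_left (nhdsWithin_mono _ Set.Ioi_subset_Ici_self)
  obtain ⟨ε, ⟨hGε, hεT⟩, hε⟩ := (((hγlim.eventually hG0).and
    ((eventually_lt_nhds hT).filter_mono nhdsWithin_le_nhds)).and self_mem_nhdsWithin).exists
  have hcont : ContinuousOn (fun t => G (γ t)) (Set.Icc ε T) :=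
    hG.comp_continuousOn (hγ.mono fun s hs => le_trans (le_of_lt hε) hs.1)
  obtain ⟨t, ht, hGt⟩ := intermediate_value_Icc' hεT.le hcont ⟨hGT, hGε.le⟩
  exact ⟨t, ⟨lt_of_lt_of_le hε ht.1, ht.2⟩, hGt⟩

theorem eventually_nhdsNE_zero_of_norm_lt {X : Type*} [NormedAddCommGroup X] {p : X → Prop}
    {r : ℝ} (hr : 0 < r) (h : ∀ u : X, 0 < ‖u‖ → ‖u‖ < r → p u) : ∀ᶠ u in 𝓝[≠] 0, p u := by
  filter_upwards [nhdsWithin_le_nhds (Metric.ball_mem_nhds (0 : X) hr), self_mem_nhdsWithin]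
    with u hur hu0
  exact h u (norm_pos_iff.2 hu0) (mem_ball_zero_iff.1 hur)

section Pohozaev

variable {ι X : Type*} {lam : ι → ℝ} {lamPhi : ℝ} {ψ : ι → X → ℝ} {Φ : X → ℝ}

structure IsHomogeneousScaling [Zero X] [TopologicalSpace X] (star : ℝ → X → X) (lam : ι → ℝ)
    (lamPhi : ℝ) (ψ : ι → X → ℝ) (Φ : X → ℝ) : Prop where
  psi : ∀ i (t : ℝ) u, 0 ≤ t → ψ i (star t u) = t ^ lam i * ψ i u
  phi : ∀ (t : ℝ) u, 0 ≤ t → Φ (star t u) = t ^ lamPhi * Φ u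
  zero : ∀ u, star 0 u = 0
  continuousOn : ∀ u, ContinuousOn (fun t => star t u) (Set.Ici 0)

theorem IsHomogeneousScaling.psi_le [Zero X] [TopologicalSpace X] {star : ℝ → X → X}
    (hs : IsHomogeneousScaling star lam lamPhi ψ Φ) (hψ : ∀ i u, 0 ≤ ψ i u)
    (hlam : ∀ i, 0 ≤ lam i) {t : ℝ} (ht₀ : 0 ≤ t) (ht₁ : t ≤ 1) (i : ι) (u : X) :
    ψ i (star t u) ≤ ψ i u := by
  rw [hs.psi i t u ht₀]
  exact mul_le_of_le_one_left (hψ i u) (Real.rpow_le_one ht₀ ht₁ (hlam i))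

variable [Fintype ι]

def energy (ψ : ι → X → ℝ) (Φ : X → ℝ) (u : X) : ℝ := ∑ i, ψ i u - Φ u

def pohozaevSet [Zero X] (lam : ι → ℝ) (lamPhi : ℝ) (ψ : ι → X → ℝ) (Φ : X → ℝ) : Set X :=
  {u | u ≠ 0 ∧ ∑ i, lam i * ψ i u = lamPhi * Φ u}

/-- The energy with `Φ` eliminated through the Pohozaev identity. -/
noncomputable def reducedEnergy (lam : ι → ℝ) (lamPhi : ℝ) (ψ : ι → X → ℝ) (u : X) : ℝ :=
  ∑ i, (1 - lam i / lamPhi) * ψ i u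

theorem energy_eq_reducedEnergy (hlamPhi : lamPhi ≠ 0) {u : X}
    (hu : ∑ i, lam i * ψ i u = lamPhi * Φ u) :
    energy ψ Φ u = reducedEnergy lam lamPhi ψ u := by
  have h : reducedEnergy lam lamPhi ψ u = ∑ i, ψ i u - (∑ i, lam i * ψ i u) / lamPhi := by
    rw [reducedEnergy, Finset.sum_div, ← Finset.sum_sub_distrib]
    exact Finset.sum_congr rfl fun i _ => by ring
  rw [h, hu, mul_div_cancel_left₀ _ hlamPhi, energy]

theorem reducedEnergy_le_of_le (hlt : ∀ i, lam i ≤ lamPhi) (hlamPhi : 0 < lamPhi) {u v : X}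
    (h : ∀ i, ψ i u ≤ ψ i v) : reducedEnergy lam lamPhi ψ u ≤ reducedEnergy lam lamPhi ψ v :=
  Finset.sum_le_sum fun i _ =>
    mul_le_mul_of_nonneg_left (h i) (sub_nonneg.2 ((div_le_one hlamPhi).2 (hlt i)))

theorem exists_pos_mul_sum_le_reducedEnergy (hψ : ∀ i u, 0 ≤ ψ i u) (hlt : ∀ i, lam i < lamPhi)
    (hlamPhi : 0 < lamPhi) : ∃ c > 0, ∀ u, c * ∑ i, ψ i u ≤ reducedEnergy lam lamPhi ψ u := by
  obtain ⟨c, hc, hci⟩ : ∃ c > 0, ∀ i, c ≤ 1 - lam i / lamPhi := by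
    cases isEmpty_or_nonempty ι
    · exact ⟨1, one_pos, isEmptyElim⟩
    · obtain ⟨i₀, hi₀⟩ := Finite.exists_min fun i => 1 - lam i / lamPhi
      exact ⟨_, sub_pos.2 ((div_lt_one hlamPhi).2 (hlt i₀)), hi₀⟩
  refine ⟨c, hc, fun u => ?_⟩
  rw [Finset.mul_sum]
  exact Finset.sum_le_sum fun i _ => mul_le_mul_of_nonneg_right (hci i) (hψ i u)

variable [Zero X]

theorem sum_pos_of_ne_zero (hψ : ∀ i u, 0 ≤ ψ i u) (hJ : ∀ u, ∑ i, ψ i u = 0 ↔ u = 0) {u : X}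
    (hu : u ≠ 0) : 0 < ∑ i, ψ i u :=
  (Finset.sum_nonneg fun i _ => hψ i u).lt_of_ne' (mt (hJ u).1 hu)

theorem phi_pos_of_mem_pohozaevSet (hψ : ∀ i u, 0 ≤ ψ i u) (hJ : ∀ u, ∑ i, ψ i u = 0 ↔ u = 0)
    (hlam : ∀ i, 0 < lam i) (hlamPhi : 0 < lamPhi) {u : X}
    (hu : u ∈ pohozaevSet lam lamPhi ψ Φ) : 0 < Φ u := by
  obtain ⟨i, -, hi⟩ :=
    (Finset.sum_pos_iff_of_nonneg fun i _ => hψ i u).1 (sum_pos_of_ne_zero hψ hJ hu.1)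
  have h : 0 < ∑ i, lam i * ψ i u := Finset.sum_pos'
    (fun j _ => mul_nonneg (hlam j).le (hψ j u)) ⟨i, Finset.mem_univ i, mul_pos (hlam i) hi⟩
  rw [hu.2] at h
  exact pos_of_mul_pos_right h hlamPhi.le

theorem exists_pos_mul_sum_le_energy (hψ : ∀ i u, 0 ≤ ψ i u) (hlt : ∀ i, lam i < lamPhi)
    (hlamPhi : 0 < lamPhi) :
    ∃ c > 0, ∀ u ∈ pohozaevSet lam lamPhi ψ Φ, c * ∑ i, ψ i u ≤ energy ψ Φ u := by
  obtain ⟨c, hc, hcu⟩ := exists_pos_mul_sum_le_reducedEnergy hψ hlt hlamPhi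
  exact ⟨c, hc, fun u hu => (energy_eq_reducedEnergy hlamPhi.ne' hu.2).symm ▸ hcu u⟩

theorem energy_nonneg_of_mem_pohozaevSet (hψ : ∀ i u, 0 ≤ ψ i u) (hlt : ∀ i, lam i < lamPhi)
    (hlamPhi : 0 < lamPhi) {u : X} (hu : u ∈ pohozaevSet lam lamPhi ψ Φ) : 0 ≤ energy ψ Φ u := by
  obtain ⟨c, hc, hcu⟩ := exists_pos_mul_sum_le_energy (Φ := Φ) hψ hlt hlamPhi
  exact (mul_nonneg hc.le (Finset.sum_nonneg fun i _ => hψ i u)).trans (hcu u hu)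

theorem bddBelow_energy_image (hψ : ∀ i u, 0 ≤ ψ i u) (hlt : ∀ i, lam i < lamPhi)
    (hlamPhi : 0 < lamPhi) : BddBelow (energy ψ Φ '' pohozaevSet lam lamPhi ψ Φ) :=
  ⟨0, Set.forall_mem_image.2 fun _ => energy_nonneg_of_mem_pohozaevSet hψ hlt hlamPhi⟩

namespace IsHomogeneousScaling

variable [TopologicalSpace X] {star : ℝ → X → X}

theorem ne_zero (hs : IsHomogeneousScaling star lam lamPhi ψ Φ) (hψ : ∀ i u, 0 ≤ ψ i u)
    (hJ : ∀ u, ∑ i, ψ i u = 0 ↔ u = 0) {t : ℝ} (ht : 0 < t) {u : X} (hu : u ≠ 0) :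
    star t u ≠ 0 := by
  obtain ⟨i, -, hi⟩ :=
    (Finset.sum_pos_iff_of_nonneg fun i _ => hψ i u).1 (sum_pos_of_ne_zero hψ hJ hu)
  have hti : 0 < ψ i (star t u) := by
    rw [hs.psi i t u ht.le]
    exact mul_pos (Real.rpow_pos_of_pos ht _) hi
  have h : 0 < ∑ j, ψ j (star t u) :=
    Finset.sum_pos' (fun j _ => hψ j _) ⟨i, Finset.mem_univ i, hti⟩
  exact fun h0 => h.ne' ((hJ _).2 h0)

/-- Intermediate value theorem along the ray `t ↦ t ∗ u`, using that `G > 0` near `0`. -/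
theorem exists_mem_pohozaevSet (hs : IsHomogeneousScaling star lam lamPhi ψ Φ)
    (hψc : ∀ i, Continuous (ψ i)) (hΦc : Continuous Φ)
    (hsmall : ∀ᶠ u in 𝓝[≠] (0 : X), lamPhi * Φ u < ∑ i, lam i * ψ i u)
    (hψ : ∀ i u, 0 ≤ ψ i u) (hJ : ∀ u, ∑ i, ψ i u = 0 ↔ u = 0) {u : X} (hu : u ≠ 0) {T : ℝ}
    (hT : 0 < T) (hTle : ∑ i, lam i * ψ i (star T u) ≤ lamPhi * Φ (star T u)) :
    ∃ t ∈ Set.Ioc 0 T, star t u ∈ pohozaevSet lam lamPhi ψ Φ := by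
  have hG : Continuous fun u => ∑ i, lam i * ψ i u - lamPhi * Φ u :=
    (continuous_finsetSum _ fun i _ => continuous_const.mul (hψc i)).sub
      (continuous_const.mul hΦc)
  obtain ⟨t, ht, hGt⟩ := exists_mem_Ioc_eq_zero_of_eventually_pos hG
    (hsmall.mono fun _ h => sub_pos.2 h) (hs.continuousOn u) (hs.zero u)
    (fun t ht => hs.ne_zero hψ hJ ht hu) hT (sub_nonpos.2 hTle)
  exact ⟨t, ht, hs.ne_zero hψ hJ ht.1 hu, sub_eq_zero.1 hGt⟩

theorem exists_mem_pohozaevSet_of_le (hs : IsHomogeneousScaling star lam lamPhi ψ Φ)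
    (hψc : ∀ i, Continuous (ψ i)) (hΦc : Continuous Φ)
    (hsmall : ∀ᶠ u in 𝓝[≠] (0 : X), lamPhi * Φ u < ∑ i, lam i * ψ i u)
    (hψ : ∀ i u, 0 ≤ ψ i u) (hJ : ∀ u, ∑ i, ψ i u = 0 ↔ u = 0) (hlam : ∀ i, 0 ≤ lam i) {u : X}
    (hu : u ≠ 0) (hle : ∑ i, lam i * ψ i u ≤ lamPhi * Φ u) :
    ∃ t ∈ Set.Ioc 0 1, star t u ∈ pohozaevSet lam lamPhi ψ Φ ∧ ∀ i, ψ i (star t u) ≤ ψ i u := by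
  have h1 : ∑ i, lam i * ψ i (star 1 u) ≤ lamPhi * Φ (star 1 u) := by
    simpa only [hs.psi _ 1 u zero_le_one, hs.phi 1 u zero_le_one, Real.one_rpow, one_mul] using hle
  obtain ⟨t, ht, htP⟩ := hs.exists_mem_pohozaevSet hψc hΦc hsmall hψ hJ hu one_pos h1
  exact ⟨t, ht, htP, fun i => hs.psi_le hψ hlam ht.1.le ht.2 i u⟩

theorem pohozaevSet_nonempty (hs : IsHomogeneousScaling star lam lamPhi ψ Φ)
    (hψc : ∀ i, Continuous (ψ i)) (hΦc : Continuous Φ)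
    (hsmall : ∀ᶠ u in 𝓝[≠] (0 : X), lamPhi * Φ u < ∑ i, lam i * ψ i u)
    (hψ : ∀ i u, 0 ≤ ψ i u) (hJ : ∀ u, ∑ i, ψ i u = 0 ↔ u = 0) (hlt : ∀ i, lam i < lamPhi)
    (hlamPhi : 0 < lamPhi) (hΦ0 : Φ 0 = 0) {u : X} (hu : 0 < Φ u) :
    (pohozaevSet lam lamPhi ψ Φ).Nonempty := by
  have hu0 : u ≠ 0 := by
    rintro rfl
    exact hu.ne' hΦ0
  -- `G (T ∗ u) < 0` for large `T`, since `Φ` has the top degree of homogeneity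
  obtain ⟨T, hT, hT0⟩ := ((eventually_sum_mul_rpow_lt_mul_rpow (fun i => lam i * ψ i u) lam hlt
    (mul_pos hlamPhi hu)).and (eventually_gt_atTop 0)).exists
  have hTle : ∑ i, lam i * ψ i (star T u) ≤ lamPhi * Φ (star T u) :=
    calc ∑ i, lam i * ψ i (star T u) = ∑ i, lam i * ψ i u * T ^ lam i :=
          Finset.sum_congr rfl fun i _ => by rw [hs.psi i T u hT0.le]; ring
      _ ≤ lamPhi * Φ u * T ^ lamPhi := hT.le
      _ = lamPhi * Φ (star T u) := by rw [hs.phi T u hT0.le]; ring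
  obtain ⟨t, -, ht⟩ := hs.exists_mem_pohozaevSet hψc hΦc hsmall hψ hJ hu0 hT0 hTle
  exact ⟨_, ht⟩

theorem exists_mem_pohozaevSet_energy_le (hs : IsHomogeneousScaling star lam lamPhi ψ Φ)
    (hψc : ∀ i, Continuous (ψ i)) (hΦc : Continuous Φ)
    (hsmall : ∀ᶠ u in 𝓝[≠] (0 : X), lamPhi * Φ u < ∑ i, lam i * ψ i u)
    (hψ : ∀ i u, 0 ≤ ψ i u) (hJ : ∀ u, ∑ i, ψ i u = 0 ↔ u = 0) (hlam : ∀ i, 0 < lam i)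
    (hlt : ∀ i, lam i < lamPhi) (hlamPhi : 0 < lamPhi) (hΦ0 : Φ 0 = 0) {u v : X}
    (hu : u ∈ pohozaevSet lam lamPhi ψ Φ) (hψv : ∀ i, ψ i v ≤ ψ i u) (hΦv : Φ u ≤ Φ v) :
    ∃ t ∈ Set.Ioc 0 1, star t v ∈ pohozaevSet lam lamPhi ψ Φ ∧
      energy ψ Φ (star t v) ≤ energy ψ Φ u := by
  have hv0 : v ≠ 0 := by
    rintro rfl
    exact (phi_pos_of_mem_pohozaevSet hψ hJ hlam hlamPhi hu).not_ge (hΦ0 ▸ hΦv)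
  have hle : ∑ i, lam i * ψ i v ≤ lamPhi * Φ v :=
    calc ∑ i, lam i * ψ i v ≤ ∑ i, lam i * ψ i u :=
          Finset.sum_le_sum fun i _ => mul_le_mul_of_nonneg_left (hψv i) (hlam i).le
      _ = lamPhi * Φ u := hu.2
      _ ≤ lamPhi * Φ v := mul_le_mul_of_nonneg_left hΦv hlamPhi.le
  obtain ⟨t, ht, htP, htψ⟩ :=
    hs.exists_mem_pohozaevSet_of_le hψc hΦc hsmall hψ hJ (fun i => (hlam i).le) hv0 hle
  refine ⟨t, ht, htP, ?_⟩
  rw [energy_eq_reducedEnergy hlamPhi.ne' htP.2, energy_eq_reducedEnergy hlamPhi.ne' hu.2]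
  exact reducedEnergy_le_of_le (fun i => (hlt i).le) hlamPhi fun i => (htψ i).trans (hψv i)

end IsHomogeneousScaling

end Pohozaev

section Compactness

variable {ι X : Type*} [Fintype ι] [NormedAddCommGroup X]
  {lam : ι → ℝ} {lamPhi : ℝ} {ψ : ι → X → ℝ} {Φ : X → ℝ}

theorem sInf_energy_pos (hψ : ∀ i u, 0 ≤ ψ i u) (hJ : ∀ u, ∑ i, ψ i u = 0 ↔ u = 0)
    (hlam : ∀ i, 0 < lam i) (hlt : ∀ i, lam i < lamPhi) (hlamPhi : 0 < lamPhi)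
    (hsmall : ∀ᶠ u in 𝓝[≠] (0 : X), lamPhi * Φ u < ∑ i, lam i * ψ i u)
    (hF4 : ∀ u : ℕ → X, (∀ k, 0 ≤ Φ (u k)) →
      Tendsto (fun k => ∑ i, ψ i (u k)) atTop (𝓝 0) → Tendsto (fun k => ‖u k‖) atTop (𝓝 0))
    (hP : (pohozaevSet lam lamPhi ψ Φ).Nonempty) :
    0 < sInf (energy ψ Φ '' pohozaevSet lam lamPhi ψ Φ) := by
  have hbdd := bddBelow_energy_image (Φ := Φ) hψ hlt hlamPhi
  obtain ⟨c, hc, hcu⟩ := exists_pos_mul_sum_le_energy (Φ := Φ) hψ hlt hlamPhi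
  have hnonneg : 0 ≤ sInf (energy ψ Φ '' pohozaevSet lam lamPhi ψ Φ) := le_csInf (hP.image _)
    (Set.forall_mem_image.2 fun _ => energy_nonneg_of_mem_pohozaevSet hψ hlt hlamPhi)
  refine hnonneg.lt_of_ne fun h0 => ?_
  obtain ⟨u, huP, hlim⟩ := exists_seq_mem_tendsto_sInf_image hP hbdd
  rw [← h0] at hlim
  have hsum : Tendsto (fun k => ∑ i, ψ i (u k)) atTop (𝓝 0) :=
    squeeze_zero (fun k => Finset.sum_nonneg fun i _ => hψ i _)
      (fun k => (le_div_iff₀' hc).2 (hcu _ (huP k))) (by simpa using hlim.div_const c)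
  -- a minimizing sequence would tend to `0` inside `𝒫`, where `G` cannot vanish
  have hu0 : Tendsto u atTop (𝓝[≠] 0) := tendsto_nhdsWithin_iff.2
    ⟨tendsto_zero_iff_norm_tendsto_zero.2
      (hF4 u (fun k => (phi_pos_of_mem_pohozaevSet hψ hJ hlam hlamPhi (huP k)).le) hsum),
      Eventually.of_forall fun k => (huP k).1⟩
  obtain ⟨k, hk⟩ := (hu0.eventually hsmall).exists
  exact hk.ne (huP k).2.symm

variable [NormedSpace ℝ X]

theorem pohozaev_le_of_weakConv {Xr : Set X} (hlamPhi : 0 < lamPhi)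
    (hF5 : ∀ (u : ℕ → X) (v : X), (∀ k, u k ∈ Xr) → WeakConv u v →
      limsup (fun k => Φ (u k)) atTop ≤ Φ v)
    (hF6 : ∀ (u : ℕ → X) (v : X), WeakConv u v →
      ∀ i, ψ i v ≤ liminf (fun k => ψ i (u k)) atTop)
    {w : ℕ → X} {v : X} {L : ι → ℝ} (hwP : ∀ k, ∑ i, lam i * ψ i (w k) = lamPhi * Φ (w k))
    (hwr : ∀ k, w k ∈ Xr) (hw : WeakConv w v)
    (hL : ∀ i, Tendsto (fun k => ψ i (w k)) atTop (𝓝 (L i))) :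
    (∀ i, ψ i v ≤ L i) ∧ ∑ i, lam i * L i ≤ lamPhi * Φ v := by
  refine ⟨fun i => (hL i).liminf_eq ▸ hF6 w v hw i, ?_⟩
  have hΦ : Tendsto (fun k => Φ (w k)) atTop (𝓝 ((∑ i, lam i * L i) / lamPhi)) := by
    have h := (tendsto_finsetSum Finset.univ fun i _ => (hL i).const_mul (lam i)).div_const lamPhi
    simpa only [hwP, mul_div_cancel_left₀ _ hlamPhi.ne'] using h
  exact (div_le_iff₀' hlamPhi).1 (hΦ.limsup_eq ▸ hF5 w v hwr hw)

theorem exists_ne_zero_pohozaev_le_reducedEnergy_le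
    (hrefl : ∀ u : ℕ → X, (∃ M, ∀ k, ‖u k‖ ≤ M) →
      ∃ (φ : ℕ → ℕ) (v : X), StrictMono φ ∧ WeakConv (u ∘ φ) v)
    (hψ : ∀ i u, 0 ≤ ψ i u) (hJ : ∀ u, ∑ i, ψ i u = 0 ↔ u = 0) (hlam : ∀ i, 0 < lam i)
    (hlt : ∀ i, lam i < lamPhi) (hlamPhi : 0 < lamPhi) (hΦ0 : Φ 0 = 0)
    (hF4' : ∀ u : ℕ → X, (∀ k, 0 ≤ Φ (u k)) →
      (∃ M, ∀ k, (∑ i, ψ i (u k)) ≤ M) → ∃ M', ∀ k, ‖u k‖ ≤ M') {Xr : Set X}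
    (hF5 : ∀ (u : ℕ → X) (v : X), (∀ k, u k ∈ Xr) → WeakConv u v →
      limsup (fun k => Φ (u k)) atTop ≤ Φ v)
    (hF6 : ∀ (u : ℕ → X) (v : X), WeakConv u v →
      ∀ i, ψ i v ≤ liminf (fun k => ψ i (u k)) atTop)
    {w : ℕ → X} (hwP : ∀ k, w k ∈ pohozaevSet lam lamPhi ψ Φ) (hwr : ∀ k, w k ∈ Xr) {m : ℝ}
    (hm : 0 < m) (hlim : Tendsto (fun k => energy ψ Φ (w k)) atTop (𝓝 m)) :
    ∃ v ≠ 0, ∑ i, lam i * ψ i v ≤ lamPhi * Φ v ∧ reducedEnergy lam lamPhi ψ v ≤ m := by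
  obtain ⟨c, hc, hcu⟩ := exists_pos_mul_sum_le_energy (Φ := Φ) hψ hlt hlamPhi
  obtain ⟨B, hB⟩ := hlim.bddAbove_range
  have hsum : ∀ k, ∑ i, ψ i (w k) ≤ B / c := fun k =>
    (le_div_iff₀' hc).2 ((hcu _ (hwP k)).trans (hB ⟨k, rfl⟩))
  obtain ⟨σ, v, L, hσ, hv, hL⟩ := exists_weakConv_subseq_tendsto hrefl
    (hF4' w (fun k => (phi_pos_of_mem_pohozaevSet hψ hJ hlam hlamPhi (hwP k)).le) ⟨_, hsum⟩)
    (f := ψ) fun k i =>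
      ⟨hψ i _, (Finset.single_le_sum (fun j _ => hψ j _) (Finset.mem_univ i)).trans (hsum k)⟩
  obtain ⟨hψv, hΦv⟩ := pohozaev_le_of_weakConv hlamPhi hF5 hF6 (fun k => (hwP (σ k)).2)
    (fun k => hwr (σ k)) hv hL
  have hm_eq : ∑ i, (1 - lam i / lamPhi) * L i = m := by
    refine tendsto_nhds_unique ?_ (hlim.comp hσ.tendsto_atTop)
    simp only [Function.comp_def, energy_eq_reducedEnergy hlamPhi.ne' (hwP _).2]
    exact tendsto_finsetSum _ fun i _ => (hL i).const_mul _
  have hweight : ∀ i, 0 ≤ 1 - lam i / lamPhi := fun i =>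
    sub_nonneg.2 ((div_le_one hlamPhi).2 (hlt i).le)
  have hL0 : ∀ i, 0 ≤ L i := fun i => ge_of_tendsto' (hL i) fun k => hψ i _
  have hΦpos : 0 < Φ v := by
    obtain ⟨i, -, hi⟩ := (Finset.sum_pos_iff_of_nonneg fun i _ =>
      mul_nonneg (hweight i) (hL0 i)).1 (hm_eq ▸ hm)
    have hlamL : 0 < ∑ i, lam i * L i := Finset.sum_pos' (fun j _ => mul_nonneg (hlam j).le (hL0 j))
      ⟨i, Finset.mem_univ i, mul_pos (hlam i) (pos_of_mul_pos_right hi (hweight i))⟩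
    exact pos_of_mul_pos_right (hlamL.trans_le hΦv) hlamPhi.le
  refine ⟨v, fun h => hΦpos.ne' (h ▸ hΦ0), ?_, ?_⟩
  · exact (Finset.sum_le_sum fun i _ => mul_le_mul_of_nonneg_left (hψv i) (hlam i).le).trans hΦv
  · exact hm_eq ▸ Finset.sum_le_sum fun i _ => mul_le_mul_of_nonneg_left (hψv i) (hweight i)

end Compactness

theorem stmt12_general {X : Type*} [NormedAddCommGroup X] [NormedSpace ℝ X]
    -- reflexivity (in the form of weak sequential compactness of bounded sequences)
    (hrefl : ∀ u : ℕ → X, (∃ M, ∀ k, ‖u k‖ ≤ M) →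
      ∃ (φ : ℕ → ℕ) (v : X), StrictMono φ ∧ WeakConv (u ∘ φ) v)
    {n : ℕ} (ψ : Fin (n + 1) → X → ℝ) (Φ : X → ℝ)
    (hψc : ∀ i, Continuous (ψ i)) (hΦc : Continuous Φ)
    (lam : Fin (n + 1) → ℝ) (lamPhi : ℝ)
    (hlam : ∀ i, 0 < lam i) (hlt : ∀ i, lam i < lamPhi)
    (star : ℝ → X → X)
    (hX1 : ∀ i (t : ℝ) u, 0 ≤ t → ψ i (star t u) = t ^ lam i * ψ i u)
    (hX2 : ∀ (t : ℝ) u, 0 ≤ t → Φ (star t u) = t ^ lamPhi * Φ u)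
    (hX4 : ∀ u, star 0 u = 0)
    (hX5 : ∀ u, ContinuousOn (fun t => star t u) (Set.Ici 0))
    (Xp Xr : Set X)
    (Q : X → X) (hQ : ∀ u ∈ Xp, Q u ∈ Xr)
    (hX6 : ∀ u ∈ Xp, ∀ i, ψ i (Q u) ≤ ψ i u)
    (hX7 : ∀ u ∈ Xp, Φ u ≤ Φ (Q u))
    (hX8 : ∀ u ∈ Xr, ∀ t : ℝ, 0 ≤ t → star t u ∈ Xr)
    (hF1 : Φ 0 = 0 ∧ ∃ u, 0 < Φ u)
    (hF2 : ∀ i u, 0 ≤ ψ i u) (hF2' : ∀ u, (∑ i, ψ i u) = 0 ↔ u = 0)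
    (hF3 : ∃ r > 0, ∀ u : X, 0 < ‖u‖ → ‖u‖ < r → lamPhi * Φ u < ∑ i, lam i * ψ i u)
    (hF4 : ∀ u : ℕ → X, (∀ k, 0 ≤ Φ (u k)) →
      Tendsto (fun k => ∑ i, ψ i (u k)) atTop (nhds 0) →
      Tendsto (fun k => ‖u k‖) atTop (nhds 0))
    (hF4' : ∀ u : ℕ → X, (∀ k, 0 ≤ Φ (u k)) →
      (∃ M, ∀ k, (∑ i, ψ i (u k)) ≤ M) → ∃ M', ∀ k, ‖u k‖ ≤ M')
    (hF5 : ∀ (u : ℕ → X) (v : X), (∀ k, u k ∈ Xr) → WeakConv u v →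
      limsup (fun k => Φ (u k)) atTop ≤ Φ v)
    (hF6 : ∀ (u : ℕ → X) (v : X), WeakConv u v →
      ∀ i, ψ i v ≤ liminf (fun k => ψ i (u k)) atTop)
    (hinf : sInf ((fun u => (∑ i, ψ i u) - Φ u) ''
        {u : X | u ≠ 0 ∧ (∑ i, lam i * ψ i u) = lamPhi * Φ u})
      = sInf ((fun u => (∑ i, ψ i u) - Φ u) ''
        ({u : X | u ≠ 0 ∧ (∑ i, lam i * ψ i u) = lamPhi * Φ u} ∩ Xp))) :
    ∃ u : X, (u ≠ 0 ∧ (∑ i, lam i * ψ i u) = lamPhi * Φ u) ∧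
      (∀ w : X, w ≠ 0 → (∑ i, lam i * ψ i w) = lamPhi * Φ w →
        (∑ i, ψ i u) - Φ u ≤ (∑ i, ψ i w) - Φ w) ∧
      0 < (∑ i, ψ i u) - Φ u := by
  obtain ⟨r, hr, hF3⟩ := hF3
  have hlamPhi : 0 < lamPhi := (hlam 0).trans (hlt 0)
  have hs : IsHomogeneousScaling star lam lamPhi ψ Φ := ⟨hX1, hX2, hX4, hX5⟩
  have hsmall := eventually_nhdsNE_zero_of_norm_lt hr hF3
  set P := pohozaevSet lam lamPhi ψ Φ
  have hP : P.Nonempty :=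
    hs.pohozaevSet_nonempty hψc hΦc hsmall hF2 hF2' hlt hlamPhi hF1.1 hF1.2.choose_spec
  have hbdd := bddBelow_energy_image (Φ := Φ) hF2 hlt hlamPhi
  have hm := sInf_energy_pos hF2 hF2' hlam hlt hlamPhi hsmall hF4 hP
  change sInf (energy ψ Φ '' P) = sInf (energy ψ Φ '' (P ∩ Xp)) at hinf
  have hPp : (P ∩ Xp).Nonempty := Set.nonempty_iff_ne_empty.2 fun h =>
    hm.ne' (by rw [hinf, h, Set.image_empty, Real.sInf_empty])
  obtain ⟨u, hu, hu_lim⟩ :=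
    exists_seq_mem_tendsto_sInf_image hPp (hbdd.mono (Set.image_mono Set.inter_subset_left))
  rw [← hinf] at hu_lim
  choose t ht htP htle using fun k => hs.exists_mem_pohozaevSet_energy_le hψc hΦc hsmall hF2
    hF2' hlam hlt hlamPhi hF1.1 (hu k).1 (hX6 _ (hu k).2) (hX7 _ (hu k).2)
  have hw_lim : Tendsto (fun k => energy ψ Φ (star (t k) (Q (u k)))) atTop
      (𝓝 (sInf (energy ψ Φ '' P))) :=
    tendsto_of_tendsto_of_tendsto_of_le_of_le tendsto_const_nhds hu_lim
      (fun k => csInf_le hbdd ⟨_, htP k, rfl⟩) htle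
  obtain ⟨v, hv0, hvle, hvm⟩ := exists_ne_zero_pohozaev_le_reducedEnergy_le hrefl hF2 hF2' hlam
    hlt hlamPhi hF1.1 hF4' hF5 hF6 htP (fun k => hX8 _ (hQ _ (hu k).2) _ (ht k).1.le) hm hw_lim
  obtain ⟨s, -, hsP, hsψ⟩ := hs.exists_mem_pohozaevSet_of_le hψc hΦc hsmall hF2 hF2'
    (fun i => (hlam i).le) hv0 hvle
  have hmin : energy ψ Φ (star s v) ≤ sInf (energy ψ Φ '' P) := by
    rw [energy_eq_reducedEnergy hlamPhi.ne' hsP.2]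
    exact (reducedEnergy_le_of_le (fun i => (hlt i).le) hlamPhi hsψ).trans hvm
  exact ⟨star s v, hsP, fun w hw0 hw => hmin.trans (csInf_le hbdd ⟨w, ⟨hw0, hw⟩, rfl⟩),
    hm.trans_le (csInf_le hbdd ⟨_, hsP, rfl⟩)⟩

theorem stmt12 {X : Type*} [NormedAddCommGroup X] [NormedSpace ℝ X] [CompleteSpace X]
    -- reflexivity (in the form of weak sequential compactness of bounded sequences)
    (hrefl : ∀ u : ℕ → X, (∃ M, ∀ k, ‖u k‖ ≤ M) →
      ∃ (φ : ℕ → ℕ) (v : X), StrictMono φ ∧ WeakConv (u ∘ φ) v)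
    {n : ℕ} (ψ : Fin (n + 1) → X → ℝ) (Φ : X → ℝ)
    (hψc : ∀ i, Continuous (ψ i)) (hΦc : Continuous Φ)
    (lam : Fin (n + 1) → ℝ) (lamPhi : ℝ)
    (hlam : ∀ i, 0 < lam i) (hlt : ∀ i, lam i < lamPhi)
    (star : ℝ → X → X)
    (hX1 : ∀ i (t : ℝ) u, 0 ≤ t → ψ i (star t u) = t ^ lam i * ψ i u)
    (hX2 : ∀ (t : ℝ) u, 0 ≤ t → Φ (star t u) = t ^ lamPhi * Φ u)
    (hX4 : ∀ u, star 0 u = 0)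
    (hX5 : ∀ u, ContinuousOn (fun t => star t u) (Set.Ici 0))
    (Xp Xr : Set X)
    (hXpcl : ∀ (u : ℕ → X) (v : X), (∀ k, u k ∈ Xp) → WeakConv u v → v ∈ Xp)
    (hXrcl : ∀ (u : ℕ → X) (v : X), (∀ k, u k ∈ Xr) → WeakConv u v → v ∈ Xr)
    (Q : X → X) (hQ : ∀ u ∈ Xp, Q u ∈ Xr)
    (hX6 : ∀ u ∈ Xp, ∀ i, ψ i (Q u) ≤ ψ i u)
    (hX7 : ∀ u ∈ Xp, Φ u ≤ Φ (Q u))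
    (hX8 : ∀ u ∈ Xr, ∀ t : ℝ, 0 ≤ t → star t u ∈ Xr)
    (hF1 : Φ 0 = 0 ∧ ∃ u, 0 < Φ u)
    (hF2 : ∀ i u, 0 ≤ ψ i u) (hF2' : ∀ u, (∑ i, ψ i u) = 0 ↔ u = 0)
    (hF3 : ∃ r > 0, ∀ u : X, 0 < ‖u‖ → ‖u‖ < r → lamPhi * Φ u < ∑ i, lam i * ψ i u)
    (hF4 : ∀ u : ℕ → X, (∀ k, 0 ≤ Φ (u k)) →
      Tendsto (fun k => ∑ i, ψ i (u k)) atTop (nhds 0) →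
      Tendsto (fun k => ‖u k‖) atTop (nhds 0))
    (hF4' : ∀ u : ℕ → X, (∀ k, 0 ≤ Φ (u k)) →
      (∃ M, ∀ k, (∑ i, ψ i (u k)) ≤ M) → ∃ M', ∀ k, ‖u k‖ ≤ M')
    (hF5 : ∀ (u : ℕ → X) (v : X), (∀ k, u k ∈ Xr) → WeakConv u v →
      limsup (fun k => Φ (u k)) atTop ≤ Φ v)
    (hF6 : ∀ (u : ℕ → X) (v : X), WeakConv u v →
      ∀ i, ψ i v ≤ liminf (fun k => ψ i (u k)) atTop)
    (hinf : sInf ((fun u => (∑ i, ψ i u) - Φ u) ''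
        {u : X | u ≠ 0 ∧ (∑ i, lam i * ψ i u) = lamPhi * Φ u})
      = sInf ((fun u => (∑ i, ψ i u) - Φ u) ''
        ({u : X | u ≠ 0 ∧ (∑ i, lam i * ψ i u) = lamPhi * Φ u} ∩ Xp))) :
    ∃ u : X, (u ≠ 0 ∧ (∑ i, lam i * ψ i u) = lamPhi * Φ u) ∧
      (∀ w : X, w ≠ 0 → (∑ i, lam i * ψ i w) = lamPhi * Φ w →
        (∑ i, ψ i u) - Φ u ≤ (∑ i, ψ i w) - Φ w) ∧
      0 < (∑ i, ψ i u) - Φ u :=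
  stmt12_general hrefl ψ Φ hψc hΦc lam lamPhi hlam hlt star hX1 hX2 hX4 hX5 Xp Xr Q hQ hX6 hX7 hX8
    hF1 hF2 hF2' hF3 hF4 hF4' hF5 hF6 hinf
end

section
/- In the setting of the abstract theorem (assumptions (X₁)–(X₈), (F₁)–(F₆)): for every u ∈ X with Φ(u) > 0 there exists a unique t* > 0 such that u_{t*} = ∗(t*, u) lies in the Pohozaev set 𝒫, and I(u_{t*}) = max_{t≥0} I(u_t). Moreover, if u ∈ 𝒫 then the maximizer is t* = 1, i.e. I(u) = max_{t≥0} I(u_t). -/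
/-!
Along the fibre `t ↦ u_t` everything is explicit: `I(u_t) = ∑ t^{λᵢ} ψᵢ(u) - t^{λ_Φ} Φ(u)`, and
`u_t ∈ 𝒫` iff `g(t) := ∑ λᵢ ψᵢ(u) t^{λᵢ - λ_Φ} = λ_Φ Φ(u)`. Since some `ψⱼ(u) > 0`, `g` decreases
strictly from `+∞` to `0` on `(0, ∞)`, which gives existence and uniqueness of `t*`. Maximality is
Bernoulli's inequality `λ_Φ (s^{λᵢ} - 1) ≤ λᵢ (s^{λ_Φ} - 1)`, summed against the Pohozaev identity
at `t*` with `s = t / t*`.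
-/

open Real Finset Filter Topology Set

theorem mul_rpow_sub_one_le {a b s : ℝ} (ha : 0 ≤ a) (hab : a ≤ b) (hb : 0 < b) (hs : 0 ≤ s) :
    b * (s ^ a - 1) ≤ a * (s ^ b - 1) := by
  have h := rpow_one_add_le_one_add_mul_self (s := s ^ b - 1)
    (by linarith [rpow_nonneg hs b]) (div_nonneg ha hb.le) ((div_le_one hb).2 hab)
  rw [add_sub_cancel, ← rpow_mul hs, mul_div_cancel₀ _ hb.ne'] at h
  calc b * (s ^ a - 1) ≤ b * (a / b * (s ^ b - 1)) := by gcongr; linarith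
    _ = a * (s ^ b - 1) := by field_simp

section Fibering

variable {ι : Type*} [Fintype ι] {lam : ι → ℝ} {μ : ℝ} {p : ι → ℝ} {q : ℝ}

theorem sum_mul_rpow_mul_eq_iff {t : ℝ} (ht : 0 < t) :
    ∑ i, lam i * (t ^ lam i * p i) = μ * (t ^ μ * q) ↔
      ∑ i, lam i * p i * t ^ (lam i - μ) = μ * q := by
  have htμ : 0 < t ^ μ := rpow_pos_of_pos ht μ
  have hsum : ∑ i, lam i * (t ^ lam i * p i) = (∑ i, lam i * p i * t ^ (lam i - μ)) * t ^ μ := by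
    rw [sum_mul]
    refine sum_congr rfl fun i _ => ?_
    rw [rpow_sub ht]
    field_simp
  rw [hsum, mul_left_comm, mul_comm (t ^ μ), mul_left_inj' htμ.ne']

theorem sum_rpow_mul_sub_le_of_sum_mul_eq (hlam : ∀ i, 0 ≤ lam i) (hle : ∀ i, lam i ≤ μ)
    (hμ : 0 < μ) (hp : ∀ i, 0 ≤ p i) (h : ∑ i, lam i * p i = μ * q) {s : ℝ} (hs : 0 ≤ s) :
    ∑ i, s ^ lam i * p i - s ^ μ * q ≤ ∑ i, p i - q := by
  have key : μ * ∑ i, (s ^ lam i - 1) * p i ≤ μ * ((s ^ μ - 1) * q) :=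
    calc μ * ∑ i, (s ^ lam i - 1) * p i = ∑ i, μ * (s ^ lam i - 1) * p i := by
          rw [mul_sum]; simp only [mul_assoc]
      _ ≤ ∑ i, lam i * (s ^ μ - 1) * p i := by
          refine sum_le_sum fun i _ => mul_le_mul_of_nonneg_right ?_ (hp i)
          exact mul_rpow_sub_one_le (hlam i) (hle i) hμ hs
      _ = μ * ((s ^ μ - 1) * q) := by
          rw [← mul_left_comm, ← h, mul_sum]
          exact sum_congr rfl fun i _ => by ring
  have := le_of_mul_le_mul_left key hμ
  simp only [sub_mul, one_mul, sum_sub_distrib] at this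
  linarith

theorem sum_rpow_mul_sub_le_of_sum_mul_rpow_eq (hlam : ∀ i, 0 ≤ lam i) (hle : ∀ i, lam i ≤ μ)
    (hμ : 0 < μ) (hp : ∀ i, 0 ≤ p i) {t₀ : ℝ} (ht₀ : 0 < t₀)
    (h : ∑ i, lam i * (t₀ ^ lam i * p i) = μ * (t₀ ^ μ * q)) {t : ℝ} (ht : 0 ≤ t) :
    ∑ i, t ^ lam i * p i - t ^ μ * q ≤ ∑ i, t₀ ^ lam i * p i - t₀ ^ μ * q := by
  have hscale : ∀ x : ℝ, t ^ x = (t / t₀) ^ x * t₀ ^ x := fun x => by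
    rw [div_rpow ht ht₀.le, div_mul_cancel₀ _ (rpow_pos_of_pos ht₀ x).ne']
  simp only [hscale, mul_assoc]
  exact sum_rpow_mul_sub_le_of_sum_mul_eq hlam hle hμ
    (fun i => mul_nonneg (rpow_nonneg ht₀.le _) (hp i)) h (div_nonneg ht ht₀.le)

end Fibering

theorem exists_unique_pos_sum_mul_rpow_eq {ι : Type*} [Fintype ι] {c e : ι → ℝ}
    (hc : ∀ i, 0 ≤ c i) {j : ι} (hj : 0 < c j) (he : ∀ i, e i < 0) {T : ℝ} (hT : 0 < T) :
    ∃! t, 0 < t ∧ ∑ i, c i * t ^ e i = T := by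
  set g : ℝ → ℝ := fun t => ∑ i, c i * t ^ e i
  have hanti : StrictAntiOn g (Ioi 0) := fun x hx y _ hxy =>
    sum_lt_sum (fun i _ => mul_le_mul_of_nonneg_left
        (rpow_le_rpow_of_nonpos hx hxy.le (he i).le) (hc i))
      ⟨j, mem_univ j, mul_lt_mul_of_pos_left (rpow_lt_rpow_of_neg hx hxy (he j)) hj⟩
  have hcont : ContinuousOn g (Ioi 0) := by
    refine continuousOn_finsetSum _ fun i _ => continuousOn_const.mul ?_
    exact ContinuousOn.rpow_const continuousOn_id fun x hx => Or.inl (ne_of_gt hx)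
  have hzero : Tendsto g (𝓝[>] 0) atTop := by
    refine tendsto_atTop_mono' _ ?_ ((tendsto_rpow_neg_nhdsGT_zero (he j)).const_mul_atTop hj)
    filter_upwards [self_mem_nhdsWithin] with x hx
    exact single_le_sum (f := fun i => c i * x ^ e i)
      (fun i _ => mul_nonneg (hc i) (rpow_nonneg (le_of_lt hx) _)) (mem_univ j)
  have htop : Tendsto g atTop (𝓝 0) := by
    simpa using tendsto_finsetSum univ fun i _ => (tendsto_rpow_neg_atTop (neg_pos.2 (he i))).const_mul (c i)
  obtain ⟨a, hga, ha⟩ := ((hzero.eventually_gt_atTop T).and self_mem_nhdsWithin).exists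
  obtain ⟨b, hgb, hab⟩ := ((htop.eventually (gt_mem_nhds hT)).and (eventually_ge_atTop a)).exists
  obtain ⟨t, ht, hgt⟩ := intermediate_value_Icc' hab
    (hcont.mono fun x hx => lt_of_lt_of_le ha hx.1) ⟨hgb.le, hga.le⟩
  have htpos : 0 < t := lt_of_lt_of_le ha ht.1
  exact ⟨t, ⟨htpos, hgt⟩, fun s ⟨hs, hgs⟩ => hanti.injOn hs htpos (hgs.trans hgt.symm)⟩

theorem stmt13_general {X : Type*} [NormedAddCommGroup X] {n : ℕ}
    (ψ : Fin (n + 1) → X → ℝ) (Φ : X → ℝ) (lam : Fin (n + 1) → ℝ) (lamPhi : ℝ)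
    (hlam : ∀ i, 0 < lam i) (hlt : ∀ i, lam i < lamPhi)
    (star : ℝ → X → X)
    (hX1 : ∀ i (t : ℝ) u, 0 ≤ t → ψ i (star t u) = t ^ lam i * ψ i u)
    (hX2 : ∀ (t : ℝ) u, 0 ≤ t → Φ (star t u) = t ^ lamPhi * Φ u)
    (hΦ0 : Φ 0 = 0)
    (hψ : ∀ i u, 0 ≤ ψ i u)
    (hJ : ∀ u, (∑ i, ψ i u) = 0 ↔ u = 0) :
    (∀ u : X, 0 < Φ u →
      ∃ tstar : ℝ,
        (0 < tstar ∧
          (star tstar u ≠ 0 ∧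
            (∑ i, lam i * ψ i (star tstar u)) = lamPhi * Φ (star tstar u)) ∧
          (∀ t : ℝ, 0 ≤ t →
            (∑ i, ψ i (star t u)) - Φ (star t u) ≤
              (∑ i, ψ i (star tstar u)) - Φ (star tstar u))) ∧
        (∀ t : ℝ, 0 < t →
          star t u ≠ 0 →
          (∑ i, lam i * ψ i (star t u)) = lamPhi * Φ (star t u) → t = tstar)) ∧
    (∀ u : X, u ≠ 0 → (∑ i, lam i * ψ i u) = lamPhi * Φ u →
      ∀ t : ℝ, 0 ≤ t → (∑ i, ψ i (star t u)) - Φ (star t u) ≤ (∑ i, ψ i u) - Φ u) := by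
  have hlam₀ : ∀ i, 0 ≤ lam i := fun i => (hlam i).le
  have hle : ∀ i, lam i ≤ lamPhi := fun i => (hlt i).le
  have hlamPhi : 0 < lamPhi := (hlam 0).trans (hlt 0)
  refine ⟨fun u hu => ?_, fun u _ hP t ht => ?_⟩
  · have hu0 : u ≠ 0 := by rintro rfl; exact hu.ne' hΦ0
    obtain ⟨j, hj⟩ : ∃ j, 0 < ψ j u := by
      by_contra! h
      exact hu0 ((hJ u).1 (sum_eq_zero fun i _ => le_antisymm (h i) (hψ i u)))
    have hpoh : ∀ t, 0 < t → ((∑ i, lam i * ψ i (star t u)) = lamPhi * Φ (star t u) ↔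
        ∑ i, lam i * ψ i u * t ^ (lam i - lamPhi) = lamPhi * Φ u) := fun t ht => by
      simp only [hX1 _ t u ht.le, hX2 t u ht.le]
      exact sum_mul_rpow_mul_eq_iff ht
    obtain ⟨t₀, ⟨ht₀, hEq⟩, huniq⟩ := exists_unique_pos_sum_mul_rpow_eq
      (fun i => mul_nonneg (hlam₀ i) (hψ i u)) (mul_pos (hlam j) hj)
      (fun i => sub_neg.2 (hlt i)) (mul_pos hlamPhi hu)
    refine ⟨t₀, ⟨ht₀, ⟨fun h0 => ?_, (hpoh t₀ ht₀).2 hEq⟩, fun t ht => ?_⟩,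
      fun t ht _ hP => huniq t ⟨ht, (hpoh t ht).1 hP⟩⟩
    · have h := hX2 t₀ u ht₀.le
      rw [h0, hΦ0] at h
      exact (mul_pos (rpow_pos_of_pos ht₀ _) hu).ne h
    · simp only [hX1 _ _ u ht, hX1 _ _ u ht₀.le, hX2 _ u ht, hX2 _ u ht₀.le]
      exact sum_rpow_mul_sub_le_of_sum_mul_rpow_eq hlam₀ hle hlamPhi (fun i => hψ i u) ht₀
        ((sum_mul_rpow_mul_eq_iff ht₀).2 hEq) ht
  · simp only [hX1 _ t u ht, hX2 t u ht]
    exact sum_rpow_mul_sub_le_of_sum_mul_eq hlam₀ hle hlamPhi (fun i => hψ i u) hP ht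

theorem stmt13 {X : Type*} [NormedAddCommGroup X] {n : ℕ}
    (ψ : Fin (n + 1) → X → ℝ) (Φ : X → ℝ) (lam : Fin (n + 1) → ℝ) (lamPhi : ℝ)
    (hlam : ∀ i, 0 < lam i) (hlt : ∀ i, lam i < lamPhi)
    (star : ℝ → X → X)
    (hX1 : ∀ i (t : ℝ) u, 0 ≤ t → ψ i (star t u) = t ^ lam i * ψ i u)
    (hX2 : ∀ (t : ℝ) u, 0 ≤ t → Φ (star t u) = t ^ lamPhi * Φ u)
    (hX4 : ∀ u, star 0 u = 0) (hΦ0 : Φ 0 = 0)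
    (hψ : ∀ i u, 0 ≤ ψ i u)
    (hJ : ∀ u, (∑ i, ψ i u) = 0 ↔ u = 0) :
    (∀ u : X, 0 < Φ u →
      ∃ tstar : ℝ,
        (0 < tstar ∧
          (star tstar u ≠ 0 ∧
            (∑ i, lam i * ψ i (star tstar u)) = lamPhi * Φ (star tstar u)) ∧
          (∀ t : ℝ, 0 ≤ t →
            (∑ i, ψ i (star t u)) - Φ (star t u) ≤
              (∑ i, ψ i (star tstar u)) - Φ (star tstar u))) ∧
        (∀ t : ℝ, 0 < t →
          star t u ≠ 0 →
          (∑ i, lam i * ψ i (star t u)) = lamPhi * Φ (star t u) → t = tstar)) ∧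
    (∀ u : X, u ≠ 0 → (∑ i, lam i * ψ i u) = lamPhi * Φ u →
      ∀ t : ℝ, 0 ≤ t → (∑ i, ψ i (star t u)) - Φ (star t u) ≤ (∑ i, ψ i u) - Φ u) :=
  stmt13_general ψ Φ lam lamPhi hlam hlt star hX1 hX2 hΦ0 hψ hJ
end

section
/- In the abstract setting, assume additionally that I(u) ≥ I(u⁺) for all u ∈ X (where u⁺ denotes the positive part, lying in X⁺), and for u ∈ 𝒫 one has u⁺ ≠ 0 and Φ(u⁺) > 0. Then inf_{w∈𝒫} I(w) = inf_{w∈𝒫⁺} I(w), i.e. the infimum of I over the Pohozaev set equals the infimum over its nonnegative part. -/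
/-!
For `u ∈ 𝒫` the positive part `u⁺` has `Φ(u⁺) > 0`, so some dilation `w = u⁺_{t⁺}` lies in `𝒫⁺`.
Then `I(w) ≤ I(u_{t⁺}) ≤ I(u)` by monotonicity under positive parts and maximality of `I` along
the dilation orbit of `u ∈ 𝒫`. Hence every value of `I` on `𝒫` is bounded below by a value on
`𝒫⁺`, which forces the two infima to agree.
-/

lemma sInf_image_inter_eq_of_forall_exists_le {X : Type*} {f : X → ℝ} {s t : Set X}
    (h : ∀ u ∈ s, ∃ w ∈ s ∩ t, f w ≤ f u) : sInf (f '' s) = sInf (f '' (s ∩ t)) := by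
  refine csInf_eq_csInf_of_forall_exists_le ?_ ?_
  · rintro _ ⟨u, hu, rfl⟩
    obtain ⟨w, hw, hwu⟩ := h u hu
    exact ⟨f w, Set.mem_image_of_mem f hw, hwu⟩
  · rintro _ ⟨w, hw, rfl⟩
    exact ⟨f w, Set.mem_image_of_mem f hw.1, le_rfl⟩

theorem stmt17_general {X : Type*} [NormedAddCommGroup X] {n : ℕ}
    (ψ : Fin (n + 1) → X → ℝ) (Φ : X → ℝ) (lam : Fin (n + 1) → ℝ) (lamPhi : ℝ)
    (star : ℝ → X → X)
    (Xp : Set X) (pos : X → X) (hposXp : ∀ u, pos u ∈ Xp)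
    (hstarXp : ∀ u ∈ Xp, ∀ t : ℝ, 0 ≤ t → star t u ∈ Xp)
    -- monotonicity under taking positive parts
    (hmon : ∀ (u : X) (t : ℝ), 0 ≤ t →
      (∑ i, ψ i (star t (pos u))) - Φ (star t (pos u)) ≤
        (∑ i, ψ i (star t u)) - Φ (star t u))
    -- for u in the Pohozaev set, the positive part is nontrivial
    (hne : ∀ u : X, u ≠ 0 → (∑ i, lam i * ψ i u) = lamPhi * Φ u →
      pos u ≠ 0 ∧ 0 < Φ (pos u))
    -- projection onto the Pohozaev set along dilations
    (hproj : ∀ v : X, 0 < Φ v → ∃ tplus : ℝ, 0 < tplus ∧ star tplus v ≠ 0 ∧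
      (∑ i, lam i * ψ i (star tplus v)) = lamPhi * Φ (star tplus v) ∧
      ∀ t : ℝ, 0 < t →
        (∑ i, ψ i (star t v)) - Φ (star t v) ≤
          (∑ i, ψ i (star tplus v)) - Φ (star tplus v))
    -- maximality along dilations on the Pohozaev set
    (hmax : ∀ u : X, u ≠ 0 → (∑ i, lam i * ψ i u) = lamPhi * Φ u →
      ∀ t : ℝ, 0 ≤ t → (∑ i, ψ i (star t u)) - Φ (star t u) ≤ (∑ i, ψ i u) - Φ u) :
    sInf ((fun u => (∑ i, ψ i u) - Φ u) ''
        {u : X | u ≠ 0 ∧ (∑ i, lam i * ψ i u) = lamPhi * Φ u})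
      = sInf ((fun u => (∑ i, ψ i u) - Φ u) ''
        ({u : X | u ≠ 0 ∧ (∑ i, lam i * ψ i u) = lamPhi * Φ u} ∩ Xp)) := by
  refine sInf_image_inter_eq_of_forall_exists_le fun u ⟨hu0, huP⟩ => ?_
  obtain ⟨-, hΦpos⟩ := hne u hu0 huP
  obtain ⟨t, ht, hw0, hwP, -⟩ := hproj (pos u) hΦpos
  refine ⟨star t (pos u), ⟨⟨hw0, hwP⟩, hstarXp (pos u) (hposXp u) t ht.le⟩, ?_⟩
  exact (hmon u t ht.le).trans (hmax u hu0 huP t ht.le)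

theorem stmt17 {X : Type*} [NormedAddCommGroup X] {n : ℕ}
    (ψ : Fin (n + 1) → X → ℝ) (Φ : X → ℝ) (lam : Fin (n + 1) → ℝ) (lamPhi : ℝ)
    (hlam : ∀ i, 0 < lam i) (hlt : ∀ i, lam i < lamPhi)
    (star : ℝ → X → X)
    (hX1 : ∀ i (t : ℝ) u, 0 ≤ t → ψ i (star t u) = t ^ lam i * ψ i u)
    (hX2 : ∀ (t : ℝ) u, 0 ≤ t → Φ (star t u) = t ^ lamPhi * Φ u)
    (hψ : ∀ i u, 0 ≤ ψ i u)
    (Xp : Set X) (pos : X → X) (hposXp : ∀ u, pos u ∈ Xp)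
    (hstarXp : ∀ u ∈ Xp, ∀ t : ℝ, 0 ≤ t → star t u ∈ Xp)
    -- monotonicity under taking positive parts
    (hmon : ∀ (u : X) (t : ℝ), 0 ≤ t →
      (∑ i, ψ i (star t (pos u))) - Φ (star t (pos u)) ≤
        (∑ i, ψ i (star t u)) - Φ (star t u))
    (hIpos : ∀ u : X, (∑ i, ψ i (pos u)) - Φ (pos u) ≤ (∑ i, ψ i u) - Φ u)
    -- for u in the Pohozaev set, the positive part is nontrivial
    (hne : ∀ u : X, u ≠ 0 → (∑ i, lam i * ψ i u) = lamPhi * Φ u →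
      pos u ≠ 0 ∧ 0 < Φ (pos u))
    -- projection onto the Pohozaev set along dilations
    (hproj : ∀ v : X, 0 < Φ v → ∃ tplus : ℝ, 0 < tplus ∧ star tplus v ≠ 0 ∧
      (∑ i, lam i * ψ i (star tplus v)) = lamPhi * Φ (star tplus v) ∧
      ∀ t : ℝ, 0 < t →
        (∑ i, ψ i (star t v)) - Φ (star t v) ≤
          (∑ i, ψ i (star tplus v)) - Φ (star tplus v))
    -- maximality along dilations on the Pohozaev set
    (hmax : ∀ u : X, u ≠ 0 → (∑ i, lam i * ψ i u) = lamPhi * Φ u →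
      ∀ t : ℝ, 0 ≤ t → (∑ i, ψ i (star t u)) - Φ (star t u) ≤ (∑ i, ψ i u) - Φ u) :
    sInf ((fun u => (∑ i, ψ i u) - Φ u) ''
        {u : X | u ≠ 0 ∧ (∑ i, lam i * ψ i u) = lamPhi * Φ u})
      = sInf ((fun u => (∑ i, ψ i u) - Φ u) ''
        ({u : X | u ≠ 0 ∧ (∑ i, lam i * ψ i u) = lamPhi * Φ u} ∩ Xp)) :=
  stmt17_general ψ Φ lam lamPhi star Xp pos hposXp hstarXp hmon hne hproj hmax
end
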